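/- For every real λ > 0 and every nonnegative integer n, Erlang's loss function is strictly decreasing in n: B(n+1, λ) < B(n, λ), where B(n, λ) = (λ^n/n!)/s_n(λ). -/

import Mathlib

/-- The `n`-th partial sum of the Taylor series of the exponential function. -/
noncomputable def s (n : ℕ) (a : ℝ) : ℝ :=
  ∑ j ∈ Finset.range (n + 1), a ^ j / (Nat.factorial j : ℝ)

/-- Erlang's loss function. -/
noncomputable def erlangB (n : ℕ) (a : ℝ) : ℝ := (a ^ n / (Nat.factorial n : ℝ)) / s n a

/-!
Write `t k = a ^ k / k!`, so that `B(n, a) = t n / s n a` and `t (k + 1) = t k * (a / (k + 1))`.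
The inequality `B(n + 1, a) < B(n, a)` amounts to `t (n + 1) * s n a < t n * s (n + 1) a`.
Expanding both products, `t (n + 1) * t j ≤ t n * t (j + 1)` for every `j ≤ n` because the ratio
`a / (k + 1)` of consecutive terms decreases in `k`; and the right-hand side has the extra
positive summand `t n * t 0`.
-/

open Finset

lemma pow_succ_div_factorial_succ (a : ℝ) (k : ℕ) :
    a ^ (k + 1) / ((k + 1).factorial : ℝ) = a ^ k / (k.factorial : ℝ) * (a / (k + 1)) := by
  rw [Nat.factorial_succ, Nat.cast_mul, pow_succ]
  push_cast
  field_simp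

lemma s_pos {a : ℝ} (ha : 0 < a) (n : ℕ) : 0 < s n a :=
  sum_pos (fun j _ => by positivity) nonempty_range_add_one

lemma s_succ_eq_one_add (n : ℕ) (a : ℝ) :
    s (n + 1) a = 1 + ∑ j ∈ range (n + 1), a ^ (j + 1) / ((j + 1).factorial : ℝ) := by
  rw [s, sum_range_succ', add_comm]
  simp

lemma pow_div_factorial_succ_mul_le {a : ℝ} (ha : 0 ≤ a) {j n : ℕ} (hj : j ≤ n) :
    a ^ (n + 1) / ((n + 1).factorial : ℝ) * (a ^ j / (j.factorial : ℝ)) ≤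
      a ^ n / (n.factorial : ℝ) * (a ^ (j + 1) / ((j + 1).factorial : ℝ)) := by
  rw [pow_succ_div_factorial_succ, pow_succ_div_factorial_succ, mul_right_comm, ← mul_assoc]
  have hratio : a / (n + 1 : ℝ) ≤ a / (j + 1 : ℝ) :=
    div_le_div_of_nonneg_left ha (by positivity) (by exact_mod_cast Nat.succ_le_succ hj)
  gcongr

lemma pow_div_factorial_succ_mul_s_lt {a : ℝ} (ha : 0 < a) (n : ℕ) :
    a ^ (n + 1) / ((n + 1).factorial : ℝ) * s n a < a ^ n / (n.factorial : ℝ) * s (n + 1) a := by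
  calc a ^ (n + 1) / ((n + 1).factorial : ℝ) * s n a
      = ∑ j ∈ range (n + 1), a ^ (n + 1) / ((n + 1).factorial : ℝ) * (a ^ j / (j.factorial : ℝ)) :=
        by rw [s, mul_sum]
    _ ≤ ∑ j ∈ range (n + 1), a ^ n / (n.factorial : ℝ) * (a ^ (j + 1) / ((j + 1).factorial : ℝ)) :=
        sum_le_sum fun j hj =>
          pow_div_factorial_succ_mul_le ha.le (Nat.lt_succ_iff.mp (mem_range.mp hj))
    _ < a ^ n / (n.factorial : ℝ) * s (n + 1) a := by
        rw [s_succ_eq_one_add, mul_add, mul_one, mul_sum]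
        exact lt_add_of_pos_left _ (by positivity)

theorem stmt_11 (a : ℝ) (ha : 0 < a) (n : ℕ) :
    erlangB (n + 1) a < erlangB n a := by
  rw [erlangB, erlangB, div_lt_div_iff₀ (s_pos ha _) (s_pos ha _)]
  exact pow_div_factorial_succ_mul_s_lt ha n
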